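/- arXiv:0704.3878 — 3 statements merged into one kernel-verified Lean document; each statement's English description precedes it below -/
import Mathlib

section
/- If f : (0,∞) → (0,∞) is differentiable, strictly increasing, and S-shaped (strictly convex on (0, γ₀) and strictly concave on (γ₀, ∞) for some γ₀ > 0) with f(0⁺) = 0 and lim_{γ→∞} f(γ) = c < ∞, then there exists a unique γ* > 0 with f(γ*) = γ* f'(γ*), and γ* maximizes f(γ)/γ over (0, ∞). -/
open Filter Set Topology

/-- If `f : (0,∞) → (0,∞)` is differentiable, strictly increasing, S-shaped
(strictly convex on `(0,γ₀)`, strictly concave on `(γ₀,∞)`), with `f(0⁺) = 0` and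
`f(γ) → c < ∞` as `γ → ∞`, then there is a unique `γ* > 0` with `f(γ*) = γ* f'(γ*)`,
and `γ*` maximizes `f(γ)/γ` over `(0,∞)`. -/
theorem stmt6 (f : ℝ → ℝ) (c γ₀ : ℝ) (hγ₀ : 0 < γ₀)
    (hdiff : ∀ γ > 0, DifferentiableAt ℝ f γ)
    (hpos : ∀ γ > 0, 0 < f γ)
    (hmono : StrictMonoOn f (Set.Ioi 0))
    (hconv : StrictConvexOn ℝ (Set.Ioo 0 γ₀) f)
    (hconc : StrictConcaveOn ℝ (Set.Ioi γ₀) f)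
    (hlim0 : Filter.Tendsto f (nhdsWithin 0 (Set.Ioi 0)) (nhds 0))
    (hlimtop : Filter.Tendsto f Filter.atTop (nhds c)) :
    ∃ γs, 0 < γs ∧ f γs = γs * deriv f γs ∧
      (∀ γ > 0, f γ = γ * deriv f γ → γ = γs) ∧
      ∀ γ > 0, f γ / γ ≤ f γs / γs := by
  have hcont : ∀ {γ : ℝ}, 0 < γ → ContinuousAt f γ := fun hγ => (hdiff _ hγ).continuousAt
  have flip : ∀ u v : ℝ, (f u - f v) / (u - v) = (f v - f u) / (v - u) := by
    intro u v
    rw [← neg_sub (f v) (f u), ← neg_sub v u, neg_div_neg_eq]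
  -- derivative as limit of slopes
  have hslope : ∀ {x : ℝ}, 0 < x →
      Tendsto (fun t => (f t - f x) / (t - x)) (𝓝[≠] x) (𝓝 (deriv f x)) := by
    intro x hx
    have h1 := hasDerivAt_iff_tendsto_slope.mp (hdiff x hx).hasDerivAt
    have h2 : slope f x = fun t => (f t - f x) / (t - x) := by
      funext t; rw [slope_def_field]
    rwa [h2] at h1
  have hslope_lt : ∀ {x : ℝ}, 0 < x →
      Tendsto (fun t => (f x - f t) / (x - t)) (𝓝[<] x) (𝓝 (deriv f x)) := by
    intro x hx
    have h1 := (hslope hx).mono_left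
      (nhdsWithin_mono x (fun t ht => ne_of_lt ht : Set.Iio x ⊆ {x}ᶜ))
    have h2 : (fun t => (f t - f x) / (t - x)) = fun t => (f x - f t) / (x - t) := by
      funext t; exact flip t x
    rwa [h2] at h1
  have hslope_gt : ∀ {x : ℝ}, 0 < x →
      Tendsto (fun t => (f t - f x) / (t - x)) (𝓝[>] x) (𝓝 (deriv f x)) := by
    intro x hx
    exact (hslope hx).mono_left
      (nhdsWithin_mono x (fun t ht => ne_of_gt ht : Set.Ioi x ⊆ {x}ᶜ))
  -- slope continuity towards γ₀ from the left
  have slope_tendsto : ∀ {a : ℝ}, a < γ₀ →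
      Tendsto (fun s => (f s - f a) / (s - a)) (𝓝[<] γ₀) (𝓝 ((f γ₀ - f a) / (γ₀ - a))) := by
    intro a ha
    apply Tendsto.div
    · exact (((hcont hγ₀).tendsto.mono_left nhdsWithin_le_nhds).sub tendsto_const_nhds)
    · exact ((continuous_id.sub continuous_const).continuousAt.tendsto.mono_left
        nhdsWithin_le_nhds)
    · exact sub_ne_zero.mpr (ne_of_gt ha)
  -- secant monotonicity on the convex part, up to γ₀
  have secmono : ∀ {a t x : ℝ}, 0 < a → a < t → t < x → x ≤ γ₀ →
      (f x - f a) / (x - a) ≤ (f x - f t) / (x - t) := by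
    intro a t x ha hat htx hxγ
    rcases lt_or_eq_of_le hxγ with hx | rfl
    · have ha' : a ∈ Set.Ioo (0:ℝ) γ₀ := ⟨ha, by linarith⟩
      have ht' : t ∈ Set.Ioo (0:ℝ) γ₀ := ⟨by linarith, by linarith⟩
      have hx' : x ∈ Set.Ioo (0:ℝ) γ₀ := ⟨by linarith, hx⟩
      have h2 := hconv.convexOn.secant_mono hx' ha' ht'
        (ne_of_lt (hat.trans htx)) (ne_of_lt htx) hat.le
      rw [flip x a, flip x t]
      exact h2
    · -- x = γ₀ : pass to the limit
      have key : ∀ᶠ s in 𝓝[<] x, (f s - f a) / (s - a) ≤ (f s - f t) / (s - t) := by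
        filter_upwards [(eventually_gt_nhds htx).filter_mono nhdsWithin_le_nhds,
          self_mem_nhdsWithin] with s hts hsx
        have ha' : a ∈ Set.Ioo (0:ℝ) x := ⟨ha, hat.trans htx⟩
        have ha'' : a ∈ Set.Ioo (0:ℝ) x := ha'
        have hs' : s ∈ Set.Ioo (0:ℝ) x := ⟨by linarith, hsx⟩
        have ht'' : t ∈ Set.Ioo (0:ℝ) x := ⟨by linarith, htx⟩
        have h2 := hconv.convexOn.secant_mono hs' ⟨ha, hat.trans htx⟩ ht''
          (ne_of_lt (hat.trans hts)) (ne_of_lt hts) hat.le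
        rw [flip s a, flip s t]
        exact h2
      exact le_of_tendsto_of_tendsto (slope_tendsto (hat.trans htx))
        (slope_tendsto htx) key
  -- derivative dominates left slopes on the convex part
  have dge : ∀ {a x : ℝ}, 0 < a → a < x → x ≤ γ₀ → (f x - f a) / (x - a) ≤ deriv f x := by
    intro a x ha hax hxγ
    have hx : 0 < x := ha.trans hax
    refine ge_of_tendsto (hslope_lt hx) ?_
    filter_upwards [(eventually_gt_nhds hax).filter_mono nhdsWithin_le_nhds,
      self_mem_nhdsWithin] with t hta htx
    exact secmono ha hta htx hxγ
  -- ratio monotone (non-strict) on the interior of the convex part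
  have rle_int : ∀ {a b : ℝ}, 0 < a → a < b → b < γ₀ → f a / a ≤ f b / b := by
    intro a b ha hab hb
    have l1 : Tendsto (fun ε => (f a - f ε) / (a - ε)) (𝓝[>] (0:ℝ)) (𝓝 (f a / a)) := by
      have h1 : Tendsto (fun ε => (f a - f ε) / (a - ε)) (𝓝[>] (0:ℝ))
          (𝓝 ((f a - 0) / (a - 0))) := by
        apply Tendsto.div
        · exact tendsto_const_nhds.sub hlim0
        · exact (tendsto_const_nhds.sub
            (continuous_id.continuousAt.tendsto.mono_left nhdsWithin_le_nhds))
        · simp [ne_of_gt ha]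
      simpa using h1
    have l2 : Tendsto (fun ε => (f b - f ε) / (b - ε)) (𝓝[>] (0:ℝ)) (𝓝 (f b / b)) := by
      have hbpos : 0 < b := ha.trans hab
      have h1 : Tendsto (fun ε => (f b - f ε) / (b - ε)) (𝓝[>] (0:ℝ))
          (𝓝 ((f b - 0) / (b - 0))) := by
        apply Tendsto.div
        · exact tendsto_const_nhds.sub hlim0
        · exact (tendsto_const_nhds.sub
            (continuous_id.continuousAt.tendsto.mono_left nhdsWithin_le_nhds))
        · simp [ne_of_gt hbpos]
      simpa using h1
    refine le_of_tendsto_of_tendsto l1 l2 ?_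
    filter_upwards [(eventually_lt_nhds ha).filter_mono nhdsWithin_le_nhds,
      self_mem_nhdsWithin] with ε hεa hε0
    have hε0' : (0:ℝ) < ε := hε0
    have hε' : ε ∈ Set.Ioo (0:ℝ) γ₀ := ⟨hε0', by linarith⟩
    have ha' : a ∈ Set.Ioo (0:ℝ) γ₀ := ⟨ha, by linarith⟩
    have hb' : b ∈ Set.Ioo (0:ℝ) γ₀ := ⟨ha.trans hab, hb⟩
    exact hconv.convexOn.secant_mono hε' ha' hb'
      (ne_of_gt hεa) (ne_of_gt (hεa.trans hab)) hab.le
  -- ratio strictly monotone on the interior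
  have rlt_int : ∀ {a b : ℝ}, 0 < a → a < b → b < γ₀ → f a / a < f b / b := by
    intro a b ha hab hb
    by_contra hcon
    push_neg at hcon
    set m := (a + b) / 2 with hm
    have hm1 : a < m := by simp only [hm]; linarith
    have hm2 : m < b := by simp only [hm]; linarith
    have e1 := rle_int ha hm1 (hm2.trans hb)
    have e2 := rle_int (ha.trans hm1) hm2 hb
    have e3 := rle_int ha hab hb
    have hq1 : f a / a = f b / b := le_antisymm e3 hcon
    have hq2 : f a / a = f m / m := le_antisymm e1 (by linarith)
    have ha' : a ∈ Set.Ioo (0:ℝ) γ₀ := ⟨ha, by linarith⟩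
    have hb' : b ∈ Set.Ioo (0:ℝ) γ₀ := ⟨ha.trans hab, hb⟩
    have hsc := hconv.2 ha' hb' (ne_of_lt hab)
      (by norm_num : (0:ℝ) < 1/2) (by norm_num : (0:ℝ) < 1/2) (by norm_num)
    simp only [smul_eq_mul] at hsc
    have hmm : (1:ℝ)/2 * a + 1/2 * b = m := by simp only [hm]; ring
    rw [hmm] at hsc
    -- f m < (f a + f b)/2
    have hfm : f m = m * (f a / a) := by
      rw [hq2]; field_simp [ne_of_gt (ha.trans hm1)]
    have hfa2 : f a = a * (f a / a) := by field_simp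
    have hfb2 : f b = b * (f a / a) := by
      rw [hq1]; field_simp [ne_of_gt (ha.trans hab)]
    have hkey : m * (f a / a) = 1 / 2 * (a * (f a / a)) + 1 / 2 * (b * (f a / a)) := by
      rw [hm]; ring
    linarith [hsc, hfm, hfa2, hfb2, hkey]
  -- ratio strictly monotone up to γ₀
  have rlt : ∀ {a b : ℝ}, 0 < a → a < b → b ≤ γ₀ → f a / a < f b / b := by
    intro a b ha hab hb
    rcases lt_or_eq_of_le hb with hb' | rfl
    · exact rlt_int ha hab hb'
    · set m := (a + b) / 2 with hm
      have hm1 : a < m := by simp only [hm]; linarith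
      have hm2 : m < b := by simp only [hm]; linarith
      refine lt_of_lt_of_le (rlt_int ha hm1 hm2) ?_
      -- f m / m ≤ f γ₀ / γ₀ by limit
      have l2 : Tendsto (fun s => f s / s) (𝓝[<] b) (𝓝 (f b / b)) := by
        apply Tendsto.div
        · exact (hcont (ha.trans hab)).tendsto.mono_left nhdsWithin_le_nhds
        · exact continuous_id.continuousAt.tendsto.mono_left nhdsWithin_le_nhds
        · exact ne_of_gt (ha.trans hab)
      refine ge_of_tendsto l2 ?_
      filter_upwards [(eventually_gt_nhds hm2).filter_mono nhdsWithin_le_nhds,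
        self_mem_nhdsWithin] with s hms hsb
      exact (rlt_int (ha.trans hm1) hms hsb).le
  -- On (0, γ₀] the tangent condition fails: f x / x < f' x
  have key_conv : ∀ {x : ℝ}, 0 < x → x ≤ γ₀ → f x / x < deriv f x := by
    intro x hx hxγ
    have ha : 0 < x / 2 := by linarith
    have hax : x / 2 < x := by linarith
    have h1 := rlt ha hax hxγ
    have h2 := dge ha hax hxγ
    have h3 : f x / x < (f x - f (x / 2)) / (x - x / 2) := by
      rw [div_lt_div_iff₀ hx (by linarith)]
      rw [div_lt_div_iff₀ ha hx] at h1
      nlinarith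
    linarith
  -- On (γ₀,∞): γ f' γ - f γ is strictly decreasing
  have hdec : ∀ {a b : ℝ}, γ₀ < a → a < b → b * deriv f b - f b < a * deriv f a - f a := by
    intro a b ha hab
    have ha0 : 0 < a := hγ₀.trans ha
    have hb0 : 0 < b := ha0.trans hab
    set s := (f b - f a) / (b - a) with hs
    have hba : (0:ℝ) < b - a := by linarith
    have hfb' : f b - f a = s * b - s * a := by
      rw [hs]; field_simp
    have h1 : deriv f b < s := by
      set m := (a + b) / 2 with hm
      have hm1 : a < m := by simp only [hm]; linarith
      have hm2 : m < b := by simp only [hm]; linarith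
      have ha' : a ∈ Set.Ioi γ₀ := ha
      have hb' : b ∈ Set.Ioi γ₀ := by simp only [Set.mem_Ioi]; linarith
      have hm' : m ∈ Set.Ioi γ₀ := by simp only [Set.mem_Ioi, hm]; linarith
      have e1 := hconc.secant_strict_mono hb' ha' hm'
        (ne_of_lt hab) (ne_of_lt hm2) hm1
      -- e1 : (f m - f b)/(m - b) < (f a - f b)/(a - b)
      have e2 : deriv f b ≤ (f m - f b) / (m - b) := by
        refine le_of_tendsto (hslope_lt hb0) ?_
        filter_upwards [(eventually_gt_nhds hm2).filter_mono nhdsWithin_le_nhds,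
          self_mem_nhdsWithin] with t hmt htb
        have ht' : t ∈ Set.Ioi γ₀ := by
          simp only [Set.mem_Ioi]
          have : γ₀ < m := hm'
          linarith
        have e3 := hconc.secant_strict_mono hb' hm' ht'
          (ne_of_lt hm2) (ne_of_lt htb) hmt
        -- e3 : (f t - f b)/(t - b) < (f m - f b)/(m - b)
        rw [flip b t]
        exact e3.le
      calc deriv f b ≤ (f m - f b) / (m - b) := e2
        _ < (f a - f b) / (a - b) := e1
        _ = s := by rw [hs, flip a b]
    have h2 : s ≤ deriv f a := by
      refine ge_of_tendsto (hslope_gt ha0) ?_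
      filter_upwards [(eventually_lt_nhds hab).filter_mono nhdsWithin_le_nhds,
        self_mem_nhdsWithin] with t htb hat
      have hat' : a < t := hat
      have ha' : a ∈ Set.Ioi γ₀ := ha
      have ht' : t ∈ Set.Ioi γ₀ := by simp only [Set.mem_Ioi]; linarith
      have hb' : b ∈ Set.Ioi γ₀ := by simp only [Set.mem_Ioi]; linarith
      have e1 := hconc.secant_strict_mono ha' ht' hb'
        (ne_of_gt hat') (ne_of_gt hab) htb
      -- e1 : (f b - f a)/(b - a) < (f t - f a)/(t - a)
      exact e1.le
    nlinarith [mul_lt_mul_of_pos_left h1 hb0, mul_le_mul_of_nonneg_left h2 ha0.le]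
  -- any tangent point lies in (γ₀, ∞)
  have hgt : ∀ {γ : ℝ}, 0 < γ → f γ = γ * deriv f γ → γ₀ < γ := by
    intro γ hγ heq
    by_contra hcon
    push_neg at hcon
    have h1 := key_conv hγ hcon
    rw [div_lt_iff₀ hγ] at h1
    nlinarith
  -- f is bounded by c, and c > 0
  have hfle : ∀ {γ : ℝ}, 0 < γ → f γ ≤ c := by
    intro γ hγ
    refine ge_of_tendsto hlimtop ?_
    filter_upwards [Filter.eventually_ge_atTop (γ + 1)] with t ht
    exact (hmono (Set.mem_Ioi.mpr hγ) (Set.mem_Ioi.mpr (by linarith)) (by linarith)).le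
  have hc : 0 < c := lt_of_lt_of_le (hpos γ₀ hγ₀) (hfle hγ₀)
  set K := f γ₀ / γ₀ with hK
  have hKpos : 0 < K := div_pos (hpos γ₀ hγ₀) hγ₀
  set B := γ₀ + 2 * c / K + 1 with hB
  have hBγ : γ₀ < B := by
    have : 0 < 2 * c / K := by positivity
    simp only [hB]; linarith
  have htail : ∀ {γ : ℝ}, B < γ → f γ / γ < K := by
    intro γ hγB
    have hγpos : 0 < γ := hγ₀.trans (hBγ.trans hγB)
    have h2cK : 2 * c / K < γ := by
      have : 0 < 2 * c / K := by positivity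
      simp only [hB] at hγB; linarith
    have hcK : c < K * γ := by
      rw [div_lt_iff₀ hKpos] at h2cK
      nlinarith
    have hle1 : f γ / γ ≤ c / γ := by
      gcongr
      exact hfle hγpos
    have hle2 : c / γ < K := by rw [div_lt_iff₀ hγpos]; linarith
    exact hle1.trans_lt hle2
  -- maximize over a compact interval
  have hgcont : ContinuousOn (fun γ => f γ / γ) (Set.Icc γ₀ B) := by
    intro x hx
    have hx0 : 0 < x := lt_of_lt_of_le hγ₀ hx.1
    exact ((hcont hx0).continuousWithinAt.div
      continuous_id.continuousAt.continuousWithinAt (ne_of_gt hx0))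
  obtain ⟨γs, hγsI, hγsmax⟩ := isCompact_Icc.exists_isMaxOn
    (Set.nonempty_Icc.mpr hBγ.le) hgcont
  have hγspos : 0 < γs := lt_of_lt_of_le hγ₀ hγsI.1
  have hKle : K ≤ f γs / γs := (isMaxOn_iff.mp hγsmax) γ₀ (Set.left_mem_Icc.mpr hBγ.le)
  have hmax : ∀ γ, 0 < γ → f γ / γ ≤ f γs / γs := by
    intro γ hγ
    rcases lt_or_ge γ γ₀ with h | h
    · exact le_trans (rlt hγ h le_rfl).le hKle
    rcases le_or_gt γ B with h2 | h2
    · exact (isMaxOn_iff.mp hγsmax) γ ⟨h, h2⟩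
    · exact le_trans (htail h2).le hKle
  -- γs is an interior local max, hence a critical point
  have hlocal : IsLocalMax (fun γ => f γ / γ) γs := by
    filter_upwards [Ioi_mem_nhds hγspos] with γ hγ using hmax γ hγ
  have hderivg : HasDerivAt (fun γ => f γ / γ)
      ((deriv f γs * γs - f γs * 1) / (γs ^ 2)) γs :=
    ((hdiff γs hγspos).hasDerivAt).div (hasDerivAt_id γs) (ne_of_gt hγspos)
  have h0 := hlocal.deriv_eq_zero
  rw [hderivg.deriv] at h0
  have heqs : f γs = γs * deriv f γs := by
    have hne : γs ^ 2 ≠ 0 := by positivity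
    rw [div_eq_zero_iff] at h0
    rcases h0 with h0 | h0
    · nlinarith
    · exact absurd h0 hne
  refine ⟨γs, hγspos, heqs, ?_, fun γ hγ => hmax γ hγ⟩
  intro γ hγ heq
  have hγγ₀ : γ₀ < γ := hgt hγ heq
  have hγsγ₀ : γ₀ < γs := hgt hγspos heqs
  rcases lt_trichotomy γ γs with h | h | h
  · exfalso
    have := hdec hγγ₀ h
    nlinarith
  · exact h
  · exfalso
    have := hdec hγsγ₀ h
    nlinarith
end

section
/- For the matched-filter receiver with K users, system bandwidth B, noise power σ², channel gains h_k > 0, symbol rates R_{s,k} and SIR targets γ_k, define Φ_k = (1 + B/(R_{s,k} γ_k))^{-1}. Then the system of SIR equations γ_k = (B/R_{s,k}) p_k h_k / (σ² + Σ_{j≠k} p_j h_j), k = 1, ..., K, has a positive solution (p_1, ..., p_K) if and only if Σ_{j=1}^K Φ_j < 1. -/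
/-- Matched-filter CDMA: the system of SIR equations
`γ_k = (B/R_{s,k}) p_k h_k / (σ² + Σ_{j≠k} p_j h_j)` has a positive power solution
iff `Σ_k Φ_k < 1`, where `Φ_k = (1 + B/(R_{s,k}γ_k))⁻¹`. -/
theorem stmt17 (K : ℕ) (B σ2 : ℝ) (hB : 0 < B) (hσ : 0 < σ2)
    (h Rs γ : Fin K → ℝ) (hh : ∀ k, 0 < h k) (hRs : ∀ k, 0 < Rs k) (hγ : ∀ k, 0 < γ k) :
    (∃ p : Fin K → ℝ, (∀ k, 0 < p k) ∧
      ∀ k, γ k = (B / Rs k) * p k * h k / (σ2 + ∑ j ∈ Finset.univ.erase k, p j * h j)) ↔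
      ∑ k, (1 + B / (Rs k * γ k))⁻¹ < 1 := by
  set Φ : Fin K → ℝ := fun k => (1 + B / (Rs k * γ k))⁻¹ with hΦdef
  have hβ : ∀ k, 0 < B / (Rs k * γ k) := fun k => div_pos hB (mul_pos (hRs k) (hγ k))
  have hone : ∀ k, (0:ℝ) < 1 + B / (Rs k * γ k) := fun k => by linarith [hβ k]
  have hΦpos : ∀ k, 0 < Φ k := fun k => inv_pos.2 (hone k)
  have hΦlt : ∀ k, Φ k < 1 := by
    intro k
    have : (1:ℝ) < 1 + B / (Rs k * γ k) := by linarith [hβ k]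
    simpa [hΦdef] using inv_lt_one_of_one_lt₀ this
  have hinv : ∀ k, Φ k * (1 + B / (Rs k * γ k)) = 1 := fun k =>
    inv_mul_cancel₀ (hone k).ne'
  have hbr : ∀ k, γ k * (B / (Rs k * γ k)) = B / Rs k := by
    intro k
    field_simp [(hγ k).ne', (hRs k).ne']
  have hkey : ∀ k, B / Rs k * Φ k = γ k * (1 - Φ k) := by
    intro k
    linear_combination (γ k) * hinv k - Φ k * hbr k
  constructor
  · rintro ⟨p, hp, heq⟩
    set S := ∑ j, p j * h j with hS
    have hph : ∀ k, p k * h k = Φ k * (σ2 + S) := by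
      intro k
      have herase : ∑ j ∈ Finset.univ.erase k, p j * h j = S - p k * h k := by
        rw [hS, ← Finset.sum_erase_add _ _ (Finset.mem_univ k)]; ring
      have hE := heq k
      rw [herase] at hE
      have hnn : (0:ℝ) ≤ S - p k * h k := by
        rw [← herase]
        exact Finset.sum_nonneg (fun j _ => le_of_lt (mul_pos (hp j) (hh j)))
      have hden : (0:ℝ) < σ2 + (S - p k * h k) := by linarith
      rw [eq_div_iff hden.ne'] at hE
      -- hE : γ k * (σ2 + (S - p k * h k)) = B / Rs k * p k * h k
      have hmul : γ k * (p k * h k * (1 + B / (Rs k * γ k))) = γ k * (σ2 + S) := by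
        linear_combination (-1 : ℝ) * hE + p k * h k * hbr k
      have hmain : p k * h k * (1 + B / (Rs k * γ k)) = σ2 + S :=
        mul_left_cancel₀ (hγ k).ne' hmul
      have : Φ k * (σ2 + S) = Φ k * (p k * h k * (1 + B / (Rs k * γ k))) := by
        rw [hmain]
      rw [this]
      have := hinv k
      linear_combination (-(p k * h k)) * hinv k
    have hsum : S = (∑ k, Φ k) * (σ2 + S) := by
      rw [Finset.sum_mul]
      conv_lhs => rw [hS]
      exact Finset.sum_congr rfl (fun k _ => hph k)
    have hSnn : (0:ℝ) ≤ S :=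
      Finset.sum_nonneg (fun j _ => le_of_lt (mul_pos (hp j) (hh j)))
    have hpos : (0:ℝ) < σ2 + S := by linarith
    have hlt : (∑ k, Φ k) * (σ2 + S) < 1 * (σ2 + S) := by
      rw [← hsum, one_mul]; linarith
    exact lt_of_mul_lt_mul_right hlt (le_of_lt hpos)
  · intro hsum
    set T := ∑ k, Φ k with hT
    have hT0 : 0 ≤ T := Finset.sum_nonneg (fun k _ => le_of_lt (hΦpos k))
    have hT1 : (0:ℝ) < 1 - T := by linarith
    refine ⟨fun k => Φ k * σ2 / ((1 - T) * h k), fun k =>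
      div_pos (mul_pos (hΦpos k) hσ) (mul_pos hT1 (hh k)), ?_⟩
    intro k
    show γ k = B / Rs k * (Φ k * σ2 / ((1 - T) * h k)) * h k /
      (σ2 + ∑ j ∈ Finset.univ.erase k, Φ j * σ2 / ((1 - T) * h j) * h j)
    have hph : ∀ j, Φ j * σ2 / ((1 - T) * h j) * h j = Φ j * σ2 / (1 - T) := by
      intro j
      rw [div_mul_eq_mul_div, mul_comm (1 - T) (h j)]
      rw [← div_div, mul_div_assoc, div_self (hh j).ne', mul_one]
    have herase : ∑ j ∈ Finset.univ.erase k, Φ j * σ2 / ((1 - T) * h j) * h j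
        = T * σ2 / (1 - T) - Φ k * σ2 / (1 - T) := by
      rw [Finset.sum_congr rfl (fun j _ => hph j),
        Finset.sum_erase_eq_sub (Finset.mem_univ k)]
      rw [hT, ← Finset.sum_div, ← Finset.sum_mul]
    rw [herase]
    have hD : σ2 + (T * σ2 / (1 - T) - Φ k * σ2 / (1 - T)) = σ2 * (1 - Φ k) / (1 - T) := by
      field_simp
      ring
    rw [hD]
    have hΦk := hΦlt k
    have hdpos : (0:ℝ) < σ2 * (1 - Φ k) / (1 - T) :=
      div_pos (mul_pos hσ (by linarith)) hT1
    rw [eq_div_iff hdpos.ne']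
    rw [mul_assoc, hph k]
    -- γ k * (σ2 * (1 - Φ k) / (1 - T)) = B / Rs k * (Φ k * σ2 / (1 - T))
    rw [← mul_div_assoc, ← mul_div_assoc, div_eq_div_iff hT1.ne' hT1.ne']
    linear_combination (-(σ2 * (1 - T))) * hkey k
end

section
/- In the matched-filter model, given feasibility Σ_j Φ_j < 1, the equilibrium utility u_k = R_k f(γ_k)/p_k equals (B f(γ_k) h_k)/(σ² γ_k) · (1 - Σ_{j≠k} Φ_j - Φ_k)/(1 - Φ_k), and this expression is strictly decreasing in each Φ_j, j ≠ k; hence it is strictly decreasing in each R_{s,j} (for fixed γ_j), so the Nash equilibrium with the smallest symbol rates Pareto-dominates all others. -/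
/-!
Write `Φ_j = (1 + B/(R_{s,j}γ_j))⁻¹` and `q_j = p_j h_j`. Each SIR equation is equivalent to
`q_j = Φ_j (σ² + Σ_i q_i)`: user `j` receives the share `Φ_j` of the total received power.
Summing over `j` gives `σ² + Σ_i q_i = σ²/(1 - Σ_j Φ_j)`, which is finite and positive exactly
under feasibility, so `p_k = Φ_k σ² / ((1 - Σ_j Φ_j) h_k)`; substituting into `R_{s,k} f(γ_k)/p_k`
gives the closed form. That closed form only sees the other users through `-Σ_{j≠k} Φ_j`, and
`Φ_j` increases with `R_{s,j}`.
-/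

open Finset

lemma inv_one_add_div_eq_div_add {B x : ℝ} (hx : x ≠ 0) : (1 + B / x)⁻¹ = x / (x + B) := by
  rw [one_add_div hx, inv_div, add_comm]

lemma inv_one_add_div_lt_one {B x : ℝ} (hB : 0 < B) (hx : 0 < x) : (1 + B / x)⁻¹ < 1 :=
  inv_lt_one_of_one_lt₀ (lt_add_of_pos_right 1 (div_pos hB hx))

lemma strictMonoOn_inv_one_add_div {B : ℝ} (hB : 0 < B) :
    StrictMonoOn (fun x : ℝ => (1 + B / x)⁻¹) (Set.Ioi 0) := by
  intro x hx y hy hxy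
  have hBy : 0 < B / y := div_pos hB hy
  have hBx : 0 < B / x := div_pos hB hx
  exact inv_strictAntiOn (Set.mem_Ioi.2 (by linarith)) (Set.mem_Ioi.2 (by linarith))
    (by gcongr)

lemma utility_eq_of_received_power_eq {B σ2 R g h p f S : ℝ} (hB : 0 < B) (hσ : σ2 ≠ 0)
    (hR : 0 < R) (hg : 0 < g) (hh : h ≠ 0) (hS : S ≠ 1)
    (hp : p * h = (1 + B / (R * g))⁻¹ * (σ2 / (1 - S))) :
    R * f / p = B * f * h / (σ2 * g) * ((1 - S) / (1 - (1 + B / (R * g))⁻¹)) := by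
  have hRg : 0 < R * g := mul_pos hR hg
  have hRgB : R * g + B ≠ 0 := by positivity
  have hS' : 1 - S ≠ 0 := sub_ne_zero.2 hS.symm
  rw [inv_one_add_div_eq_div_add hRg.ne'] at hp
  rw [inv_one_add_div_eq_div_add hRg.ne', one_sub_div hRgB, add_sub_cancel_left]
  have hp' : p = R * g * σ2 / ((R * g + B) * (1 - S) * h) := by
    rw [eq_div_iff (by positivity), ← mul_assoc, mul_right_comm, hp]
    field_simp
  rw [hp']
  field_simp

section SIR

variable {ι : Type*} [Fintype ι]

lemma eq_inv_one_add_div_mul_of_sir [DecidableEq ι] {σ2 B : ℝ} {q R γ : ι → ℝ} {j : ι}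
    (hB : 0 < B) (hR : 0 < R j) (hγ : 0 < γ j)
    (hsir : γ j = (B / R j) * q j / (σ2 + ∑ i ∈ univ.erase j, q i)) :
    q j = (1 + B / (R j * γ j))⁻¹ * (σ2 + ∑ i, q i) := by
  set D := σ2 + ∑ i ∈ univ.erase j, q i
  have hD : D ≠ 0 := by
    rintro hD
    rw [hD, div_zero] at hsir
    exact hγ.ne' hsir
  have htotal : σ2 + ∑ i, q i = D + q j := by
    rw [← sum_erase_add univ q (mem_univ j), add_assoc]
  have hRγ : 0 < R j * γ j := mul_pos hR hγ
  rw [htotal, inv_one_add_div_eq_div_add hRγ.ne', div_mul_eq_mul_div, eq_div_iff (by positivity)]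
  rw [eq_div_iff hD] at hsir
  field_simp at hsir
  linear_combination -hsir

lemma add_sum_eq_div_one_sub_sum {K : Type*} [Field K] {c : K} {a q : ι → K}
    (hq : ∀ j, q j = a j * (c + ∑ i, q i)) (ha : ∑ j, a j ≠ 1) :
    c + ∑ i, q i = c / (1 - ∑ j, a j) := by
  have hsum : ∑ i, q i = (∑ j, a j) * (c + ∑ i, q i) := by
    rw [sum_mul]
    exact sum_congr rfl fun j _ => hq j
  rw [eq_div_iff (sub_ne_zero.2 ha.symm)]
  linear_combination hsum

end SIR

theorem stmt18_general (K : ℕ) (B σ2 : ℝ) (hB : 0 < B) (hσ : 0 < σ2)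
    (h Rs γ p : Fin K → ℝ) (f : ℝ → ℝ)
    (hh : ∀ j, 0 < h j) (hRs : ∀ j, 0 < Rs j) (hγ : ∀ j, 0 < γ j)
    (k : Fin K) (hfk : 0 < f (γ k))
    (hSIR : ∀ j, γ j = (B / Rs j) * p j * h j /
        (σ2 + ∑ i ∈ Finset.univ.erase j, p i * h i))
    (hfeas : ∑ j, (1 + B / (Rs j * γ j))⁻¹ < 1) :
    Rs k * f (γ k) / p k =
      (B * f (γ k) * h k / (σ2 * γ k)) *
        ((1 - (∑ j ∈ Finset.univ.erase k, (1 + B / (Rs j * γ j))⁻¹) -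
            (1 + B / (Rs k * γ k))⁻¹) / (1 - (1 + B / (Rs k * γ k))⁻¹)) ∧
    (∀ (Φ' : Fin K → ℝ) (j : Fin K), j ≠ k →
      (1 + B / (Rs j * γ j))⁻¹ < Φ' j →
      (∀ i, i ≠ j → Φ' i = (1 + B / (Rs i * γ i))⁻¹) →
      (B * f (γ k) * h k / (σ2 * γ k)) *
          ((1 - (∑ i ∈ Finset.univ.erase k, Φ' i) - Φ' k) / (1 - Φ' k)) <
        (B * f (γ k) * h k / (σ2 * γ k)) *
          ((1 - (∑ i ∈ Finset.univ.erase k, (1 + B / (Rs i * γ i))⁻¹) -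
              (1 + B / (Rs k * γ k))⁻¹) / (1 - (1 + B / (Rs k * γ k))⁻¹))) ∧
    (∀ j : Fin K, ∀ r₁ r₂ : ℝ, 0 < r₁ → r₁ < r₂ →
      (1 + B / (r₁ * γ j))⁻¹ < (1 + B / (r₂ * γ j))⁻¹) := by
  set Φ : Fin K → ℝ := fun j => (1 + B / (Rs j * γ j))⁻¹
  have hreceived (j : Fin K) : p j * h j = Φ j * (σ2 + ∑ i, p i * h i) :=
    eq_inv_one_add_div_mul_of_sir hB (hRs j) (hγ j) (by rw [hSIR j, mul_assoc])
  have htotal : σ2 + ∑ i, p i * h i = σ2 / (1 - ∑ j, Φ j) :=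
    add_sum_eq_div_one_sub_sum hreceived hfeas.ne
  have hsplit : 1 - ∑ j ∈ univ.erase k, Φ j - Φ k = 1 - ∑ j, Φ j := by
    rw [← sum_erase_add univ Φ (mem_univ k)]
    ring
  refine ⟨?_, ?_, ?_⟩
  · rw [hsplit]
    exact utility_eq_of_received_power_eq hB hσ.ne' (hRs k) (hγ k) (hh k).ne' hfeas.ne
      (htotal ▸ hreceived k)
  · intro Φ' j hjk hΦ'j hΦ'
    have hsum : ∑ i ∈ univ.erase k, Φ i < ∑ i ∈ univ.erase k, Φ' i := by
      refine sum_lt_sum (fun i _ => ?_) ⟨j, mem_erase.2 ⟨hjk, mem_univ j⟩, hΦ'j⟩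
      rcases eq_or_ne i j with rfl | hij
      · exact hΦ'j.le
      · exact (hΦ' i hij).ge
    have hΦk : 0 < 1 - Φ k := sub_pos.2 (inv_one_add_div_lt_one hB (mul_pos (hRs k) (hγ k)))
    have hC : 0 < B * f (γ k) * h k / (σ2 * γ k) := by have := hh k; have := hγ k; positivity
    rw [hΦ' k hjk.symm]
    gcongr
  · intro j r₁ r₂ hr₁ hr₁₂
    exact strictMonoOn_inv_one_add_div hB (mul_pos hr₁ (hγ j))
      (mul_pos (hr₁.trans hr₁₂) (hγ j)) (mul_lt_mul_of_pos_right hr₁₂ (hγ j))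

/-- Matched-filter model at equilibrium: the utility `R_{s,k} f(γ_k)/p_k` equals
`(B f(γ_k) h_k)/(σ²γ_k) · (1 - Σ_{j≠k}Φ_j - Φ_k)/(1 - Φ_k)`, this expression is strictly
decreasing in each `Φ_j` (`j ≠ k`), and `Φ_j` is strictly increasing in `R_{s,j}` for
fixed `γ_j`; hence the equilibrium with the smallest symbol rates Pareto-dominates. -/
theorem stmt18 (K : ℕ) (B σ2 : ℝ) (hB : 0 < B) (hσ : 0 < σ2)
    (h Rs γ p : Fin K → ℝ) (f : ℝ → ℝ)
    (hh : ∀ j, 0 < h j) (hRs : ∀ j, 0 < Rs j) (hγ : ∀ j, 0 < γ j) (hp : ∀ j, 0 < p j)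
    (k : Fin K) (hfk : 0 < f (γ k))
    (hSIR : ∀ j, γ j = (B / Rs j) * p j * h j /
        (σ2 + ∑ i ∈ Finset.univ.erase j, p i * h i))
    (hfeas : ∑ j, (1 + B / (Rs j * γ j))⁻¹ < 1) :
    Rs k * f (γ k) / p k =
      (B * f (γ k) * h k / (σ2 * γ k)) *
        ((1 - (∑ j ∈ Finset.univ.erase k, (1 + B / (Rs j * γ j))⁻¹) -
            (1 + B / (Rs k * γ k))⁻¹) / (1 - (1 + B / (Rs k * γ k))⁻¹)) ∧
    (∀ (Φ' : Fin K → ℝ) (j : Fin K), j ≠ k →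
      (1 + B / (Rs j * γ j))⁻¹ < Φ' j →
      (∀ i, i ≠ j → Φ' i = (1 + B / (Rs i * γ i))⁻¹) →
      (B * f (γ k) * h k / (σ2 * γ k)) *
          ((1 - (∑ i ∈ Finset.univ.erase k, Φ' i) - Φ' k) / (1 - Φ' k)) <
        (B * f (γ k) * h k / (σ2 * γ k)) *
          ((1 - (∑ i ∈ Finset.univ.erase k, (1 + B / (Rs i * γ i))⁻¹) -
              (1 + B / (Rs k * γ k))⁻¹) / (1 - (1 + B / (Rs k * γ k))⁻¹))) ∧
    (∀ j : Fin K, ∀ r₁ r₂ : ℝ, 0 < r₁ → r₁ < r₂ →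
      (1 + B / (r₁ * γ j))⁻¹ < (1 + B / (r₂ * γ j))⁻¹) :=
  stmt18_general K B σ2 hB hσ h Rs γ p f hh hRs hγ k hfk hSIR hfeas
end
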